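/- Assume the Continuum Hypothesis (𝔠 = ℵ₁). Then there exists a maximal almost disjoint family F of infinite subsets of ℕ with the following property: for every real matrix (λ_{i,j})_{i,j∈ℕ} satisfying (i) for every j, λ_{i,j} → 0 as i → ∞; (ii) for every i, Σ_j |λ_{i,j}| < ∞; and (iii) Σ_j λ_{i,j} → 1 as i → ∞, there exists N ∈ F such that the sequence (Σ_{j ∈ N} λ_{i,j})_{i∈ℕ} does not converge to 0. -/

import Mathlib

/-! Under CH, list all requirements in order type `ω₁`: for each infinite `S ⊆ ℕ`, "some member
meets `S` infinitely", and for each admissible matrix `λ`, "some member `N` has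
`Σ_{j ∈ N} λ i j ↛ 0`". Build the family by transfinite recursion, so that every stage sees only
countably many sets, and at each stage adjoin a witness of the current requirement that is almost
disjoint from everything so far. For `S` the witness is `S` itself. For `λ`, if every set so far is
`λ`-null, enumerate them and note that the finite unions `U m` are still null (their pairwise
intersections are finite); a sliding hump then picks rows `i m` and finite blocks `B m` avoiding
`U m`, on which row `i m` has mass `> 1/2` while its `ℓ¹`-mass outside the current window is
`< 1/4`. Then `N = ⋃ B m` meets each `U m` finitely and `Σ_{j ∈ N} λ (i m) j > 1/4`. -/

open Filter Topology Set Cardinal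

section SubtypeSums

variable {β : Type*} {f : β → ℝ} {A B : Set β}

lemma abs_tsum_subtype_le (hf : Summable f) (hAB : A ⊆ B) :
    |∑' j : A, f j| ≤ ∑' j : B, |f j| :=
  calc |∑' j : A, f j| ≤ ∑' j : A, |f j| := by
        simpa only [Real.norm_eq_abs] using norm_tsum_le_tsum_norm (hf.norm.subtype (· ∈ A))
    _ ≤ ∑' j : B, |f j| :=
      Summable.tsum_le_tsum_of_inj (inclusion hAB) (inclusion_injective hAB)
        (fun _ _ => abs_nonneg _) (fun _ => le_rfl) (hf.abs.subtype (· ∈ A))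
        (hf.abs.subtype (· ∈ B))

lemma tsum_union_add_tsum_inter (hf : Summable f) (A B : Set β) :
    ∑' j : ↑(A ∪ B), f j + ∑' j : ↑(A ∩ B), f j = ∑' j : A, f j + ∑' j : B, f j := by
  simp only [tsum_subtype]
  rw [← Summable.tsum_add (hf.indicator _) (hf.indicator _),
    ← Summable.tsum_add (hf.indicator _) (hf.indicator _)]
  exact tsum_congr (indicator_union_add_inter_apply f A B)

lemma tsum_subtype_add_tsum_diff (hf : Summable f) (hBA : B ⊆ A) :
    ∑' j : B, f j + ∑' j : ↑(A \ B), f j = ∑' j : A, f j := by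
  rw [← hf.subtype (· ∈ B) |>.tsum_union_disjoint disjoint_sdiff_right (hf.subtype (· ∈ A \ B)),
    union_sdiff_cancel hBA]

end SubtypeSums

structure IsAdmissibleMatrix {β : Type*} (lam : ℕ → β → ℝ) : Prop where
  tendsto_col : ∀ j, Tendsto (fun i => lam i j) atTop (𝓝 0)
  summable_abs : ∀ i, Summable fun j => |lam i j|
  tendsto_tsum : Tendsto (fun i => ∑' j, lam i j) atTop (𝓝 1)

lemma IsAdmissibleMatrix.summable {β : Type*} {lam : ℕ → β → ℝ} (hlam : IsAdmissibleMatrix lam)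
    (i : ℕ) : Summable (lam i) :=
  (hlam.summable_abs i).of_abs

def IsNull {β : Type*} (lam : ℕ → β → ℝ) (A : Set β) : Prop :=
  Tendsto (fun i => ∑' j : A, lam i j) atTop (𝓝 0)

def AlmostDisjoint {α : Type*} (F : Set (Set α)) : Prop :=
  F.Pairwise fun A B => (A ∩ B).Finite

section IsNull

variable {β : Type*} {lam : ℕ → β → ℝ} {A B : Set β}

lemma tendsto_sum_abs_of_tendsto_col (h : ∀ j, Tendsto (fun i => lam i j) atTop (𝓝 0))
    (P : Finset β) : Tendsto (fun i => ∑ j ∈ P, |lam i j|) atTop (𝓝 0) := by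
  simpa using tendsto_finsetSum P fun j _ => (h j).abs

lemma isNull_of_finite (h : ∀ j, Tendsto (fun i => lam i j) atTop (𝓝 0)) (hA : A.Finite) :
    IsNull lam A := by
  lift A to Finset β using hA
  simpa only [IsNull, Finset.tsum_subtype', Finset.sum_const_zero] using
    tendsto_finsetSum A fun j _ => h j

lemma IsNull.union (hs : ∀ i, Summable (lam i)) (hA : IsNull lam A) (hB : IsNull lam B)
    (hAB : IsNull lam (A ∩ B)) : IsNull lam (A ∪ B) := by
  have := (hA.add hB).sub hAB
  rw [add_zero, sub_zero] at this
  refine this.congr fun i => ?_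
  rw [← tsum_union_add_tsum_inter (hs i), add_sub_cancel_right]

lemma IsNull.union_of_inter_finite (h : ∀ j, Tendsto (fun i => lam i j) atTop (𝓝 0))
    (hs : ∀ i, Summable (lam i)) (hA : IsNull lam A) (hB : IsNull lam B)
    (hAB : (A ∩ B).Finite) : IsNull lam (A ∪ B) :=
  hA.union hs hB (isNull_of_finite h hAB)

lemma isNull_sUnion (h : ∀ j, Tendsto (fun i => lam i j) atTop (𝓝 0))
    (hs : ∀ i, Summable (lam i)) {G : Set (Set β)} (hG : AlmostDisjoint G)
    (hG0 : ∀ A ∈ G, IsNull lam A) {s : Set (Set β)} (hsf : s.Finite) (hsG : s ⊆ G) :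
    IsNull lam (⋃₀ s) := by
  refine Set.Finite.induction_on_subset (motive := fun t _ => IsNull lam (⋃₀ t)) s hsf
    (by simpa using isNull_of_finite h finite_empty) fun {A t} hA hts hAt ih => ?_
  rw [sUnion_insert]
  refine (hG0 A (hsG hA)).union_of_inter_finite h hs ih ?_
  rw [sUnion_eq_biUnion, inter_iUnion₂]
  exact (hsf.subset hts).biUnion fun M hM =>
    hG (hsG hA) (hsG (hts hM)) (ne_of_mem_of_not_mem hM hAt).symm

end IsNull

section SlidingHump

variable {β : Type*} {lam : ℕ → β → ℝ}

lemma exists_monotone_isNull_cover (h : ∀ j, Tendsto (fun i => lam i j) atTop (𝓝 0))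
    (hs : ∀ i, Summable (lam i)) {G : Set (Set β)} (hGc : G.Countable) (hG : AlmostDisjoint G)
    (hG0 : ∀ A ∈ G, IsNull lam A) :
    ∃ U : ℕ → Set β, Monotone U ∧ (∀ m, IsNull lam (U m)) ∧ ∀ A ∈ G, ∃ m, A ⊆ U m := by
  obtain ⟨g, hg⟩ := Set.countable_iff_exists_subset_range.mp hGc
  refine ⟨fun m => ⋃₀ (G ∩ g '' Iic m), fun m n hmn => ?_, fun m => ?_, fun A hA => ?_⟩
  · exact sUnion_mono (inter_subset_inter_right G (image_mono (Iic_subset_Iic.mpr hmn)))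
  · exact isNull_sUnion h hs hG hG0 (((finite_Iic m).image g).subset inter_subset_right)
      inter_subset_left
  · obtain ⟨m, rfl⟩ := hg hA
    exact ⟨m, subset_sUnion_of_mem ⟨hA, m, mem_Iic.mpr le_rfl, rfl⟩⟩

lemma exists_hump (hlam : IsAdmissibleMatrix lam) {U : Set β} (hU : IsNull lam U)
    (P : Finset β) (i₀ : ℕ) :
    ∃ i > i₀, ∃ B Q : Finset β, Disjoint (B : Set β) (↑P ∪ U) ∧ ↑P ∪ ↑B ⊆ (Q : Set β) ∧
      1 / 2 < ∑ j ∈ B, lam i j ∧ ∑' j : ↥((Q : Set β) \ P)ᶜ, |lam i j| < 1 / 4 := by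
  classical
  set V : Set β := ↑P ∪ U
  have hV : IsNull lam V :=
    (isNull_of_finite hlam.tendsto_col P.finite_toSet).union_of_inter_finite hlam.tendsto_col
      hlam.summable hU (P.finite_toSet.subset inter_subset_left)
  obtain ⟨i, hi₀, hrow, hVi, hPi⟩ : ∃ i, i₀ < i ∧ 7 / 8 < ∑' j, lam i j ∧
      ∑' j : V, lam i j < 1 / 8 ∧ ∑ j ∈ P, |lam i j| < 1 / 8 :=
    ((eventually_gt_atTop i₀).and ((hlam.tendsto_tsum.eventually_const_lt (by norm_num)).and
      ((hV.eventually_lt_const (by norm_num)).and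
        ((tendsto_sum_abs_of_tendsto_col hlam.tendsto_col P).eventually_lt_const
          (by norm_num))))).exists
  have hVc : 1 / 2 < ∑' j : ↥Vᶜ, lam i j := by
    have := (hlam.summable i).subtype (· ∈ V) |>.tsum_add_tsum_compl
      ((hlam.summable i).subtype (· ∈ Vᶜ))
    linarith
  obtain ⟨t, ht⟩ := (((hlam.summable i).subtype (· ∈ Vᶜ)).hasSum.eventually_const_lt hVc).exists
  set B : Finset β := t.map (Function.Embedding.subtype _)
  have hBV : Disjoint (B : Set β) V := by
    refine subset_compl_iff_disjoint_right.mp fun x hx => ?_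
    obtain ⟨y, -, rfl⟩ := Finset.mem_map.mp hx
    exact y.2
  obtain ⟨Q, hQ, hPBQ⟩ := (((tendsto_tsum_compl_atTop_zero fun j => |lam i j|).eventually_lt_const
    (by norm_num : (0 : ℝ) < 1 / 8)).and (eventually_ge_atTop (P ∪ B))).exists
  have hPBQ' : ↑P ∪ ↑B ⊆ (Q : Set β) := by
    rw [← Finset.coe_union, Finset.coe_subset]
    exact hPBQ
  refine ⟨i, hi₀, B, Q, hBV, hPBQ', by simpa [B] using ht, ?_⟩
  have hwindow : ((Q : Set β) \ P)ᶜ = ↑P ∪ (↑Q)ᶜ := by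
    rw [Set.compl_sdiff, union_comm]
  rw [hwindow, ((hlam.summable_abs i).subtype _).tsum_union_disjoint
      (disjoint_compl_right_iff_subset.mpr (subset_union_left.trans hPBQ'))
      ((hlam.summable_abs i).subtype _),
    Finset.tsum_subtype' P fun j => |lam i j|]
  exact (add_lt_add hPi hQ).trans_eq (by norm_num)

lemma exists_not_isNull_inter_finite (hlam : IsAdmissibleMatrix lam) {U : ℕ → Set β}
    (hUm : Monotone U) (hU : ∀ m, IsNull lam (U m)) :
    ∃ N : Set β, (∀ m, (N ∩ U m).Finite) ∧ ¬ IsNull lam N := by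
  choose row hrow block window hdisj hwindow hmass htail using
    fun (m : ℕ) (s : ℕ × Finset β) => exists_hump hlam (hU m) s.2 s.1
  -- the previous row and the finite set used up before step `m`
  let st : ℕ → ℕ × Finset β := fun m =>
    Nat.rec (motive := fun _ => ℕ × Finset β) (0, ∅) (fun m s => (row m s, window m s)) m
  set r : ℕ → ℕ := fun m => row m (st m)
  set B : ℕ → Finset β := fun m => block m (st m)
  set P : ℕ → Set β := fun m => (st m).2
  have hP : Monotone P := monotone_nat_of_le_succ fun m =>
    subset_union_left.trans (hwindow m (st m))
  have hBP : ∀ m, (B m : Set β) ⊆ P (m + 1) := fun m =>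
    subset_union_right.trans (hwindow m (st m))
  have hr : StrictMono r := strictMono_nat_of_lt_succ fun m => hrow (m + 1) (st (m + 1))
  set N : Set β := ⋃ m, (B m : Set β)
  have hNB : ∀ m, N \ B m ⊆ (P (m + 1) \ P m)ᶜ := by
    rintro m x ⟨hx, hxm⟩ ⟨hx₁, hx₀⟩
    obtain ⟨l, hl⟩ := mem_iUnion.mp hx
    rcases lt_trichotomy l m with hlm | rfl | hml
    · exact hx₀ (hP hlm (hBP l hl))
    · exact hxm hl
    · exact disjoint_left.mp (hdisj l (st l)) hl (Or.inl (hP hml hx₁))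
  have hbound : ∀ m, 1 / 4 < ∑' j : N, lam (r m) j := fun m =>
    calc 1 / 4 < ∑ j ∈ B m, lam (r m) j - ∑' j : ↥(P (m + 1) \ P m)ᶜ, |lam (r m) j| := by
          linarith [hmass m (st m), htail m (st m)]
      _ ≤ ∑' j : (B m : Set β), lam (r m) j + ∑' j : ↑(N \ B m), lam (r m) j := by
          rw [Finset.tsum_subtype' (B m) (lam (r m))]
          linarith [neg_abs_le (∑' j : ↑(N \ B m), lam (r m) j),
            abs_tsum_subtype_le (hlam.summable (r m)) (hNB m)]
      _ = ∑' j : N, lam (r m) j :=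
          tsum_subtype_add_tsum_diff (hlam.summable (r m))
            (subset_iUnion (fun m => (B m : Set β)) m)
  refine ⟨N, fun k => ?_, fun hN => ?_⟩
  · refine (st k).2.finite_toSet.subset ?_
    rintro x ⟨hx, hxU⟩
    obtain ⟨l, hl⟩ := mem_iUnion.mp hx
    rcases lt_or_ge l k with hlk | hkl
    · exact hP hlk (hBP l hl)
    · exact (disjoint_left.mp (hdisj l (st l)) hl (Or.inr (hUm hkl hxU))).elim
  · have := ge_of_tendsto' (hN.comp hr.tendsto_atTop) fun m => (hbound m).le
    norm_num at this

lemma exists_not_isNull_almostDisjoint (hlam : IsAdmissibleMatrix lam) {G : Set (Set β)}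
    (hGc : G.Countable) (hG : AlmostDisjoint G) (hG0 : ∀ A ∈ G, IsNull lam A) :
    ∃ N, (∀ M ∈ G, (N ∩ M).Finite) ∧ ¬ IsNull lam N := by
  obtain ⟨U, hUm, hU, hGU⟩ :=
    exists_monotone_isNull_cover hlam.tendsto_col hlam.summable hGc hG hG0
  obtain ⟨N, hNU, hN⟩ := exists_not_isNull_inter_finite hlam hUm hU
  refine ⟨N, fun M hM => ?_, hN⟩
  obtain ⟨m, hm⟩ := hGU M hM
  exact (hNU m).subset (inter_subset_inter_right N hm)

end SlidingHump

section TransfiniteConstruction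

variable {α : Type*}

open Classical in
noncomputable def adjoinWitness (G R : Set (Set α)) : Set (Set α) :=
  if h : ∃ N ∈ R, N.Infinite ∧ ∀ M ∈ G, (N ∩ M).Finite then {h.choose} else ∅

lemma adjoinWitness_subsingleton (G R : Set (Set α)) : (adjoinWitness G R).Subsingleton := by
  unfold adjoinWitness
  split_ifs
  exacts [subsingleton_singleton, subsingleton_empty]

lemma mem_adjoinWitness {G R : Set (Set α)} {N : Set α} (hN : N ∈ adjoinWitness G R) :
    N ∈ R ∧ N.Infinite ∧ ∀ M ∈ G, (N ∩ M).Finite := by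
  unfold adjoinWitness at hN
  split_ifs at hN with h
  · exact (mem_singleton_iff.mp hN) ▸ h.choose_spec
  · exact absurd hN (notMem_empty N)

lemma adjoinWitness_nonempty {G R : Set (Set α)}
    (h : ∃ N ∈ R, N.Infinite ∧ ∀ M ∈ G, (N ∩ M).Finite) : (adjoinWitness G R).Nonempty := by
  unfold adjoinWitness
  rw [dif_pos h]
  exact singleton_nonempty _

def IsCountablyExtendable (R : Set (Set α)) : Prop :=
  ∀ G : Set (Set α), G.Countable → AlmostDisjoint G → (∀ M ∈ G, M ∉ R) →
    ∃ N ∈ R, N.Infinite ∧ ∀ M ∈ G, (N ∩ M).Finite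

variable {J : Type*} [LinearOrder J] [WellFoundedLT J] (G₀ : Set (Set α)) (e : J → Set (Set α))

noncomputable def familyBelow : J → Set (Set α) :=
  wellFounded_lt.fix fun x below => G₀ ∪ ⋃ y : Iio x, adjoinWitness (below y y.2) (e y)

noncomputable def stage (x : J) : Set (Set α) := adjoinWitness (familyBelow G₀ e x) (e x)

noncomputable def family : Set (Set α) := G₀ ∪ ⋃ x, stage G₀ e x

lemma familyBelow_eq (x : J) : familyBelow G₀ e x = G₀ ∪ ⋃ y : Iio x, stage G₀ e y :=
  wellFounded_lt.fix_eq _ x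

variable {G₀ e}

lemma stage_subset_familyBelow {x y : J} (hxy : x < y) : stage G₀ e x ⊆ familyBelow G₀ e y := by
  rw [familyBelow_eq]
  exact subset_union_of_subset_right (subset_iUnion (fun z : Iio y => stage G₀ e z) ⟨x, hxy⟩) _

lemma familyBelow_subset_family (x : J) : familyBelow G₀ e x ⊆ family G₀ e := by
  rw [familyBelow_eq]
  exact union_subset_union_right _ (iUnion_subset fun y => subset_iUnion (stage G₀ e) y)

lemma familyBelow_countable (hG₀ : G₀.Countable) (hJ : ∀ x : J, (Iio x).Countable) (x : J) :
    (familyBelow G₀ e x).Countable := by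
  rw [familyBelow_eq]
  have := (hJ x).to_subtype
  exact hG₀.union (countable_iUnion fun y => (adjoinWitness_subsingleton _ _).countable)

lemma family_infinite (hG₀ : ∀ M ∈ G₀, M.Infinite) : ∀ M ∈ family G₀ e, M.Infinite := by
  rintro M (hM | hM)
  · exact hG₀ M hM
  · obtain ⟨x, hx⟩ := mem_iUnion.mp hM
    exact (mem_adjoinWitness hx).2.1

lemma inter_finite_of_mem_stage {x : J} {N M : Set α} (hN : N ∈ stage G₀ e x)
    (hM : M ∈ familyBelow G₀ e x) : (N ∩ M).Finite :=
  (mem_adjoinWitness hN).2.2 M hM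

lemma family_almostDisjoint (hG₀ : AlmostDisjoint G₀) : AlmostDisjoint (family G₀ e) := by
  have hbase : ∀ x, G₀ ⊆ familyBelow G₀ e x := fun x => by
    rw [familyBelow_eq]; exact subset_union_left
  suffices h : ∀ x, ∀ N ∈ stage G₀ e x, ∀ M ∈ family G₀ e, M ≠ N → (N ∩ M).Finite by
    rintro M hM N (hN | hN) hMN
    · rcases hM with hM | hM
      · exact hG₀ hM hN hMN
      · obtain ⟨x, hx⟩ := mem_iUnion.mp hM
        exact h x M hx N (Or.inl hN) hMN.symm
    · obtain ⟨x, hx⟩ := mem_iUnion.mp hN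
      rw [inter_comm]
      exact h x N hx M hM hMN
  rintro x N hN M (hM | hM) hMN
  · exact inter_finite_of_mem_stage hN (hbase x hM)
  obtain ⟨y, hy⟩ := mem_iUnion.mp hM
  rcases lt_trichotomy x y with hxy | rfl | hyx
  · rw [inter_comm]
    exact inter_finite_of_mem_stage hy (stage_subset_familyBelow hxy hN)
  · exact (hMN (adjoinWitness_subsingleton _ _ hy hN)).elim
  · exact inter_finite_of_mem_stage hN (stage_subset_familyBelow hyx hy)

lemma exists_mem_family_mem (hG₀c : G₀.Countable) (hJ : ∀ x : J, (Iio x).Countable)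
    (hG₀ : AlmostDisjoint G₀) {x : J} (hx : IsCountablyExtendable (e x)) :
    ∃ M ∈ family G₀ e, M ∈ e x := by
  by_cases h : ∃ M ∈ familyBelow G₀ e x, M ∈ e x
  · obtain ⟨M, hM, hMx⟩ := h
    exact ⟨M, familyBelow_subset_family x hM, hMx⟩
  push Not at h
  have hAD : AlmostDisjoint (familyBelow G₀ e x) :=
    Set.Pairwise.mono (familyBelow_subset_family x) (family_almostDisjoint hG₀)
  obtain ⟨N, hN⟩ := adjoinWitness_nonempty (hx _ (familyBelow_countable hG₀c hJ x) hAD h)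
  exact ⟨N, Or.inr (mem_iUnion.mpr ⟨x, hN⟩), (mem_adjoinWitness hN).1⟩

end TransfiniteConstruction

theorem exists_almostDisjoint_forall_exists_mem {α : Type*} {ι : Type} (R : ι → Set (Set α))
    (hι : #ι ≤ ℵ₁) (hR : ∀ i, IsCountablyExtendable (R i)) {G₀ : Set (Set α)}
    (hG₀c : G₀.Countable) (hG₀ : AlmostDisjoint G₀) (hG₀inf : ∀ M ∈ G₀, M.Infinite) :
    ∃ F, G₀ ⊆ F ∧ AlmostDisjoint F ∧ (∀ M ∈ F, M.Infinite) ∧ ∀ i, ∃ M ∈ F, M ∈ R i := by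
  obtain ⟨g⟩ : Nonempty (ι ↪ (ℵ₁ : Cardinal).ord.ToType) := by
    rwa [← Cardinal.le_def, mk_ord_toType]
  have hJ : ∀ x : (ℵ₁ : Cardinal).ord.ToType, (Iio x).Countable := fun x =>
    le_aleph0_iff_set_countable.mp <| lt_aleph_one_iff.mp <|
      (mk_Iio_lt x (by rw [mk_ord_toType, Ordinal.type_toType])).trans_eq (mk_ord_toType _)
  set e := Function.extend g R fun _ => ∅
  refine ⟨family G₀ e, subset_union_left, family_almostDisjoint hG₀, family_infinite hG₀inf,
    fun i => ?_⟩
  have he : e (g i) = R i := g.injective.extend_apply R _ i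
  exact he ▸ exists_mem_family_mem hG₀c hJ hG₀ (he ▸ hR i)

def unpairFibers : Set (Set ℕ) := range fun k => {n | n.unpair.1 = k}

lemma unpairFibers_almostDisjoint : AlmostDisjoint unpairFibers := by
  rintro _ ⟨k, rfl⟩ _ ⟨l, rfl⟩ hkl
  exact finite_empty.subset fun n ⟨hk, hl⟩ => hkl (hk.symm.trans hl ▸ rfl)

lemma unpairFibers_infinite : unpairFibers.Infinite :=
  infinite_range_of_injective fun k l h => by simpa using (Set.ext_iff.mp h (Nat.pair k 0))

lemma infinite_of_mem_unpairFibers : ∀ M ∈ unpairFibers, M.Infinite := by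
  rintro _ ⟨k, rfl⟩
  exact infinite_of_injective_forall_mem (fun a b h => (Nat.pair_eq_pair.mp h).2)
    fun t => congrArg Prod.fst (Nat.unpair_pair k t)

abbrev MadRequirementIndex : Type :=
  {S : Set ℕ // S.Infinite} ⊕ {lam : ℕ → ℕ → ℝ // IsAdmissibleMatrix lam}

def madRequirement : MadRequirementIndex → Set (Set ℕ)
  | .inl S => {M | (S.1 ∩ M).Infinite}
  | .inr lam => {M | ¬ IsNull lam.1 M}

lemma isCountablyExtendable_madRequirement : ∀ r, IsCountablyExtendable (madRequirement r)
  | .inl ⟨S, hS⟩ => fun _ _ _ hG =>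
      ⟨S, by simpa [madRequirement] using hS, hS, fun M hM => not_infinite.mp (hG M hM)⟩
  | .inr ⟨lam, hlam⟩ => fun _ hGc hG hG0 => by
      obtain ⟨N, hNG, hN⟩ :=
        exists_not_isNull_almostDisjoint hlam hGc hG fun A hA => not_not.mp (hG0 A hA)
      exact ⟨N, hN, fun hfin => hN (isNull_of_finite hlam.tendsto_col hfin), hNG⟩

lemma mk_madRequirementIndex_le (hCH : Cardinal.continuum.{0} = ℵ₁) :
    #MadRequirementIndex ≤ ℵ₁ := by
  rw [mk_sum, lift_id, lift_id, ← hCH, ← continuum_add_self]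
  refine add_le_add ((mk_subtype_le _).trans_eq mk_set_nat) ((mk_subtype_le _).trans_eq ?_)
  simp [mk_real, continuum_power_aleph0]

/-- Under the Continuum Hypothesis there exists a maximal almost disjoint
family `F` of infinite subsets of `ℕ` such that for every matrix `(λ i j)` with
(i) columns tending to `0`, (ii) absolutely summable rows, (iii) row sums tending to `1`,
there exists `N ∈ F` such that `(Σ_{j ∈ N} λ i j)_i` does not converge to `0`. -/
theorem statement18 (hCH : Cardinal.continuum = Cardinal.aleph 1) :
    ∃ F : Set (Set ℕ), F.Infinite ∧ (∀ M ∈ F, M.Infinite) ∧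
      (∀ M ∈ F, ∀ M' ∈ F, M ≠ M' → (M ∩ M').Finite) ∧
      (∀ S : Set ℕ, S.Infinite → ∃ M ∈ F, (S ∩ M).Infinite) ∧
      ∀ lam : ℕ → ℕ → ℝ,
        (∀ j, Tendsto (fun i => lam i j) atTop (𝓝 0)) →
        (∀ i, Summable (fun j => |lam i j|)) →
        Tendsto (fun i => ∑' j, lam i j) atTop (𝓝 1) →
        ∃ M ∈ F, ¬ Tendsto (fun i => ∑' j : ↥M, lam i (j : ℕ)) atTop (𝓝 0) := by
  obtain ⟨F, hF₀, hF, hFinf, hFmad⟩ := exists_almostDisjoint_forall_exists_mem madRequirement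
    (mk_madRequirementIndex_le (lift_injective (by simpa using hCH)))
    isCountablyExtendable_madRequirement (countable_range _) unpairFibers_almostDisjoint
    infinite_of_mem_unpairFibers
  exact ⟨F, unpairFibers_infinite.mono hF₀, hFinf, fun M hM M' hM' => hF hM hM',
    fun S hS => hFmad (.inl ⟨S, hS⟩), fun lam h1 hs h3 => hFmad (.inr ⟨lam, h1, hs, h3⟩)⟩
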